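/- arXiv:math/0607584 — 4 statements merged into one kernel-verified Lean document; each statement's English description precedes it below -/
import Mathlib

section
/- Let A and B be positive elements of a unital C*-algebra. Then (A+B)^{1/2} ≥ 2^{-1/2}(A^{1/2} + B^{1/2}), and more generally for every positive integer k one has (A+B)^{1/2^k} ≥ 2^{-1+2^{-k}}(A^{1/2^k} + B^{1/2^k}), where fractional powers of positive elements are defined by the continuous functional calculus and ≥ is the order induced by the positive cone. -/
/-! Operator concavity of `a ↦ a ^ p` for `p ∈ [0, 1]` (`CFC.concaveOn_rpow`) gives
`(a ^ p + b ^ p) / 2 ≤ ((a + b) / 2) ^ p`, and `((a + b) / 2) ^ p = 2 ^ (-p) • (a + b) ^ p`. -/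

open Set

namespace CFC

variable {A : Type*} [CStarAlgebra A] [PartialOrder A] [StarOrderedRing A]

lemma smul_rpow {r p : ℝ} (hr : 0 ≤ r) (hp : 0 ≤ p) {a : A} (ha : 0 ≤ a) :
    (r • a) ^ p = r ^ p • a ^ p := by
  rw [rpow_eq_cfc_real (smul_nonneg hr ha), rpow_eq_cfc_real ha,
    ← cfc_comp_const_mul r (· ^ p) a, ← cfc_const_mul (r ^ p) (· ^ p) a]
  exact cfc_congr fun x hx => Real.mul_rpow hr (spectrum_nonneg_of_nonneg ha hx)

lemma two_rpow_sub_one_smul_add_rpow_le {p : ℝ} (hp : p ∈ Icc 0 1) {a b : A}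
    (ha : 0 ≤ a) (hb : 0 ≤ b) : (2 : ℝ) ^ (p - 1) • (a ^ p + b ^ p) ≤ (a + b) ^ p := by
  have hmid : (1 / 2 : ℝ) • (a ^ p + b ^ p) ≤ ((1 / 2 : ℝ) • (a + b)) ^ p := by
    simpa only [smul_add] using (concaveOn_rpow (A := A) hp).2 ha hb
      (by norm_num : (0 : ℝ) ≤ 1 / 2) (by norm_num : (0 : ℝ) ≤ 1 / 2) (by norm_num)
  rw [smul_rpow (by norm_num) hp.1 (add_nonneg ha hb)] at hmid
  calc (2 : ℝ) ^ (p - 1) • (a ^ p + b ^ p) = (2 : ℝ) ^ p • (1 / 2 : ℝ) • (a ^ p + b ^ p) := by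
        rw [smul_smul, Real.rpow_sub_one two_ne_zero, div_eq_mul_one_div]
    _ ≤ (2 : ℝ) ^ p • (1 / 2 : ℝ) ^ p • (a + b) ^ p := by gcongr
    _ = (a + b) ^ p := by
        rw [smul_smul, ← Real.mul_rpow (by norm_num) (by norm_num)]
        norm_num

end CFC

/-- Lemma 3.6: for positive elements `A, B` of a unital C*-algebra,
`(A+B)^{1/2} ≥ 2^{-1/2}(A^{1/2} + B^{1/2})` and, for every positive integer `k`,
`(A+B)^{1/2^k} ≥ 2^{-1+2^{-k}}(A^{1/2^k} + B^{1/2^k})`. -/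
theorem stmt_5 {A : Type*} [CStarAlgebra A] [PartialOrder A] [StarOrderedRing A]
    (a b : A) (ha : 0 ≤ a) (hb : 0 ≤ b) :
    ((2 : ℝ) ^ (-(1 : ℝ) / 2)) •
        (cfc (fun t : ℝ => t ^ ((1 : ℝ) / 2)) a + cfc (fun t : ℝ => t ^ ((1 : ℝ) / 2)) b) ≤
      cfc (fun t : ℝ => t ^ ((1 : ℝ) / 2)) (a + b) ∧
    ∀ k : ℕ, 1 ≤ k →
      ((2 : ℝ) ^ (-1 + (2 : ℝ) ^ (-(k : ℝ)))) •
          (cfc (fun t : ℝ => t ^ ((1 : ℝ) / 2 ^ k)) a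
            + cfc (fun t : ℝ => t ^ ((1 : ℝ) / 2 ^ k)) b) ≤
        cfc (fun t : ℝ => t ^ ((1 : ℝ) / 2 ^ k)) (a + b) := by
  simp only [← CFC.rpow_eq_cfc_real ha, ← CFC.rpow_eq_cfc_real hb,
    ← CFC.rpow_eq_cfc_real (add_nonneg ha hb)]
  refine ⟨?_, fun k _ => ?_⟩
  · convert CFC.two_rpow_sub_one_smul_add_rpow_le (p := 1 / 2) (by norm_num) ha hb using 3
    norm_num
  · have hp : (1 : ℝ) / 2 ^ k ∈ Icc 0 1 :=
      ⟨by positivity, div_le_one_of_le₀ (one_le_pow₀ one_le_two) (by positivity)⟩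
    convert CFC.two_rpow_sub_one_smul_add_rpow_le hp ha hb using 3
    rw [Real.rpow_neg zero_le_two, Real.rpow_natCast, one_div]
    ring
end

section
/- Let d ≥ 1, t > 0, let S : L₂(ℝ^d) → L₂(ℝ^d) be a bounded operator, and let D be a set of bounded Lipschitz functions ψ : ℝ^d → ℝ. Assume that for every ψ ∈ D and every ρ ∈ ℝ the operator e^{ρψ} S e^{−ρψ} (composition of S with multiplication by e^{ρψ} on the left and by e^{−ρψ} on the right) has L₂ → L₂ operator norm at most e^{ρ²t}. For measurable sets A, B ⊆ ℝ^d define d̂(A;B) = sup_{ψ∈D} inf_{x∈A, y∈B} (ψ(x) − ψ(y)). Then for all measurable A, B and all φ_A ∈ L₂ supported in A, φ_B ∈ L₂ supported in B: |⟨φ_A, S φ_B⟩| ≤ e^{−(max(d̂(A;B),0))²/(4t)} ‖φ_A‖₂ ‖φ_B‖₂. (Abstract Davies–Gaffney estimate obtained by optimizing over ψ and ρ.) -/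
/-!
Conjugating by `e^{ρψ}` gives `⟨φ_A, S φ_B⟩ = ⟨e^{-ρψ} φ_A, (e^{ρψ} S e^{-ρψ}) e^{ρψ} φ_B⟩`.
If `ψ ≥ m` on `A` and `ψ ≤ m - c` on `B`, the two weighted functions have `L₂` norms at most
`e^{-ρm} ‖φ_A‖` and `e^{ρ(m-c)} ‖φ_B‖`, so the form is bounded by `e^{ρ²t - ρc} ‖φ_A‖ ‖φ_B‖`.
The choice `ρ = max(c,0)/(2t)` minimises the exponent, which becomes `-max(c,0)²/(4t)`.
-/

open MeasureTheory Real

theorem exp_neg_mul_exp_mul_cancel (r : ℝ) (z : ℂ) :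
    Complex.exp ↑(-r) * (Complex.exp ↑r * z) = z := by
  rw [← mul_assoc, ← Complex.exp_add, Complex.ofReal_neg, neg_add_cancel, Complex.exp_zero, one_mul]

theorem conj_exp_neg_mul_mul_exp_mul (r : ℝ) (z w : ℂ) :
    (starRingEnd ℂ) (Complex.exp ↑(-r) * z) * (Complex.exp ↑r * w) = (starRingEnd ℂ) z * w := by
  rw [map_mul, ← Complex.exp_conj, Complex.conj_ofReal, mul_mul_mul_comm, ← Complex.exp_add,
    Complex.ofReal_neg, neg_add_cancel, Complex.exp_zero, one_mul]

theorem norm_exp_mul_le_of_le_on {α : Type*} {w : α → ℝ} {φ : α → ℂ} {A : Set α} {a : ℝ}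
    (hφ : ∀ x, x ∉ A → φ x = 0) (hw : ∀ x ∈ A, w x ≤ a) (x : α) :
    ‖Complex.exp (w x) * φ x‖ ≤ Real.exp a * ‖φ x‖ := by
  by_cases hx : x ∈ A
  · rw [norm_mul, Complex.norm_exp, Complex.ofReal_re]
    gcongr
    exact hw x hx
  · simp [hφ x hx]

section Weights

variable {α : Type*} [MeasurableSpace α] {μ : Measure α} {p : ENNReal} {w : α → ℝ} {φ : α → ℂ}
  {A : Set α} {a : ℝ}

theorem MeasureTheory.MemLp.exp_mul_of_le_on (hφp : MemLp φ p μ) (hwm : AEStronglyMeasurable w μ)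
    (hφ : ∀ x, x ∉ A → φ x = 0) (hw : ∀ x ∈ A, w x ≤ a) :
    MemLp (fun x => Complex.exp (w x) * φ x) p μ :=
  hφp.of_le_mul
    (((Complex.continuous_exp.comp Complex.continuous_ofReal).comp_aestronglyMeasurable
      hwm).mul hφp.aestronglyMeasurable)
    (.of_forall (norm_exp_mul_le_of_le_on hφ hw))

theorem eLpNorm_exp_mul_toReal_le_of_le_on (hφp : MemLp φ p μ)
    (hφ : ∀ x, x ∉ A → φ x = 0) (hw : ∀ x ∈ A, w x ≤ a) :
    (eLpNorm (fun x => Complex.exp (w x) * φ x) p μ).toReal ≤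
      Real.exp a * (eLpNorm φ p μ).toReal := by
  have h := eLpNorm_le_mul_eLpNorm_of_ae_le_mul (μ := μ)
    (.of_forall (norm_exp_mul_le_of_le_on hφ hw)) p
  calc _ ≤ (ENNReal.ofReal (Real.exp a) * eLpNorm φ p μ).toReal :=
        ENNReal.toReal_mono (ENNReal.mul_ne_top ENNReal.ofReal_ne_top hφp.eLpNorm_ne_top) h
    _ = _ := by rw [ENNReal.toReal_mul, ENNReal.toReal_ofReal (Real.exp_pos a).le]

end Weights

theorem exists_separating_level {α : Type*} {ψ : α → ℝ} {A B : Set α} {c : ℝ}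
    (hA : BddBelow (ψ '' A)) (hB : BddAbove (ψ '' B))
    (hsep : ∀ x ∈ A, ∀ y ∈ B, c ≤ ψ x - ψ y) :
    ∃ m, (∀ x ∈ A, m ≤ ψ x) ∧ ∀ y ∈ B, ψ y + c ≤ m := by
  rcases A.eq_empty_or_nonempty with rfl | hAne
  · exact ⟨sSup (ψ '' B) + c, by simp, fun y hy => by linarith [le_csSup hB ⟨y, hy, rfl⟩]⟩
  · refine ⟨sInf (ψ '' A), fun x hx => csInf_le hA ⟨x, hx, rfl⟩, fun y hy => ?_⟩
    refine le_csInf (hAne.image ψ) ?_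
    rintro _ ⟨x, hx, rfl⟩
    linarith [hsep x hx y hy]

theorem norm_integral_conj_mul_le_of_twisted_bound {α : Type*} [MeasurableSpace α]
    {μ : Measure α} {S : (α → ℂ) → α → ℂ} {ψ : α → ℝ} {ρ M c m : ℝ} {A B : Set α}
    {φA φB : α → ℂ} (hψ : AEStronglyMeasurable ψ μ) (hρ : 0 ≤ ρ) (hM : 0 ≤ M)
    (hS : ∀ f g : α → ℂ, MemLp f 2 μ → MemLp g 2 μ →
      ‖∫ x, (starRingEnd ℂ) (g x) * (Complex.exp (↑(ρ * ψ x)) *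
          S (fun y => Complex.exp (↑(-(ρ * ψ y))) * f y) x) ∂μ‖ ≤
        M * (eLpNorm f 2 μ).toReal * (eLpNorm g 2 μ).toReal)
    (hφA : MemLp φA 2 μ) (hφB : MemLp φB 2 μ)
    (hsA : ∀ x, x ∉ A → φA x = 0) (hsB : ∀ x, x ∉ B → φB x = 0)
    (hmA : ∀ x ∈ A, m ≤ ψ x) (hmB : ∀ y ∈ B, ψ y + c ≤ m) :
    ‖∫ x, (starRingEnd ℂ) (φA x) * S φB x ∂μ‖ ≤
      M * Real.exp (-(ρ * c)) * (eLpNorm φA 2 μ).toReal * (eLpNorm φB 2 μ).toReal := by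
  have hwA : ∀ x ∈ A, -(ρ * ψ x) ≤ -(ρ * m) := fun x hx =>
    neg_le_neg (mul_le_mul_of_nonneg_left (hmA x hx) hρ)
  have hwB : ∀ y ∈ B, ρ * ψ y ≤ ρ * (m - c) := fun y hy =>
    mul_le_mul_of_nonneg_left (le_sub_iff_add_le.2 (hmB y hy)) hρ
  have htwisted := hS _ _ (hφB.exp_mul_of_le_on (w := fun y => ρ * ψ y) (hψ.const_mul ρ) hsB hwB)
    (hφA.exp_mul_of_le_on (w := fun x => -(ρ * ψ x)) (hψ.const_mul ρ).neg hsA hwA)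
  simp only [exp_neg_mul_exp_mul_cancel, conj_exp_neg_mul_mul_exp_mul] at htwisted
  calc _ ≤ _ := htwisted
    _ ≤ M * (Real.exp (ρ * (m - c)) * (eLpNorm φB 2 μ).toReal) *
          (Real.exp (-(ρ * m)) * (eLpNorm φA 2 μ).toReal) := by
      gcongr
      · exact eLpNorm_exp_mul_toReal_le_of_le_on hφB hsB hwB
      · exact eLpNorm_exp_mul_toReal_le_of_le_on hφA hsA hwA
    _ = _ := by
      rw [show -(ρ * c) = ρ * (m - c) + -(ρ * m) by ring, Real.exp_add]
      ring

theorem max_div_sq_mul_sub_mul {t : ℝ} (ht : 0 < t) (c : ℝ) :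
    (max c 0 / (2 * t)) ^ 2 * t - max c 0 / (2 * t) * c = -(max c 0) ^ 2 / (4 * t) := by
  rcases le_total c 0 with hc | hc
  · rw [max_eq_right hc]; ring
  · rw [max_eq_left hc]; field_simp; ring

theorem stmt_8_general (d : ℕ) (t : ℝ) (ht : 0 < t)
    (S : (EuclideanSpace ℝ (Fin d) → ℂ) → (EuclideanSpace ℝ (Fin d) → ℂ))
    (D : Set (EuclideanSpace ℝ (Fin d) → ℝ))
    (hD : ∀ ψ ∈ D, (∃ C, ∀ x, |ψ x| ≤ C) ∧ ∃ K, LipschitzWith K ψ)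
    (hS : ∀ ψ ∈ D, ∀ ρ : ℝ, ∀ f g : EuclideanSpace ℝ (Fin d) → ℂ,
      MemLp f 2 volume → MemLp g 2 volume →
      ‖∫ x, (starRingEnd ℂ) (g x) * (Complex.exp (↑(ρ * ψ x)) *
          S (fun y => Complex.exp (↑(-(ρ * ψ y))) * f y) x)‖ ≤
        Real.exp (ρ ^ 2 * t) * (eLpNorm f 2 volume).toReal * (eLpNorm g 2 volume).toReal) :
    ∀ A B : Set (EuclideanSpace ℝ (Fin d)), MeasurableSet A → MeasurableSet B →
    ∀ φA φB : EuclideanSpace ℝ (Fin d) → ℂ,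
      MemLp φA 2 volume → MemLp φB 2 volume →
      (∀ x, x ∉ A → φA x = 0) → (∀ x, x ∉ B → φB x = 0) →
      ∀ c : ℝ, (∃ ψ ∈ D, ∀ x ∈ A, ∀ y ∈ B, c ≤ ψ x - ψ y) →
      ‖∫ x, (starRingEnd ℂ) (φA x) * S φB x‖ ≤
        Real.exp (-(max c 0) ^ 2 / (4 * t)) *
          (eLpNorm φA 2 volume).toReal * (eLpNorm φB 2 volume).toReal := by
  intro A B _ _ φA φB hφA hφB hsA hsB c ⟨ψ, hψD, hsep⟩
  obtain ⟨⟨C, hC⟩, K, hK⟩ := hD ψ hψD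
  obtain ⟨m, hmA, hmB⟩ := exists_separating_level
    ⟨-C, by rintro _ ⟨x, -, rfl⟩; linarith [abs_le.1 (hC x)]⟩
    ⟨C, by rintro _ ⟨x, -, rfl⟩; linarith [abs_le.1 (hC x)]⟩ hsep
  have h := norm_integral_conj_mul_le_of_twisted_bound hK.continuous.aestronglyMeasurable
    (by positivity : 0 ≤ max c 0 / (2 * t)) (Real.exp_pos _).le (hS ψ hψD _)
    hφA hφB hsA hsB hmA hmB
  rwa [← Real.exp_add, ← sub_eq_add_neg, max_div_sq_mul_sub_mul ht] at h

/-- Abstract Davies–Gaffney estimate (Proposition 4.1). If for every `ψ` in a family `D`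
of bounded Lipschitz functions and every `ρ ∈ ℝ` the twisted operator
`e^{ρψ} S e^{-ρψ}` has `L₂ → L₂` norm at most `e^{ρ²t}` (expressed here in weak form
against arbitrary `L₂` functions), then for `φ_A, φ_B` supported in `A, B` one has
`|⟨φ_A, S φ_B⟩| ≤ e^{-(max(d̂(A;B),0))²/(4t)} ‖φ_A‖₂ ‖φ_B‖₂`, where the supremum
defining `d̂(A;B)` is expressed by quantifying over all reals `c` admitting a witness
`ψ ∈ D` with `ψ(x) - ψ(y) ≥ c` for all `x ∈ A`, `y ∈ B`. -/
theorem stmt_8 (d : ℕ) (hd : 1 ≤ d) (t : ℝ) (ht : 0 < t)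
    (S : (EuclideanSpace ℝ (Fin d) → ℂ) → (EuclideanSpace ℝ (Fin d) → ℂ))
    (D : Set (EuclideanSpace ℝ (Fin d) → ℝ))
    (hD : ∀ ψ ∈ D, (∃ C, ∀ x, |ψ x| ≤ C) ∧ ∃ K, LipschitzWith K ψ)
    (hS : ∀ ψ ∈ D, ∀ ρ : ℝ, ∀ f g : EuclideanSpace ℝ (Fin d) → ℂ,
      MemLp f 2 volume → MemLp g 2 volume →
      ‖∫ x, (starRingEnd ℂ) (g x) * (Complex.exp (↑(ρ * ψ x)) *
          S (fun y => Complex.exp (↑(-(ρ * ψ y))) * f y) x)‖ ≤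
        Real.exp (ρ ^ 2 * t) * (eLpNorm f 2 volume).toReal * (eLpNorm g 2 volume).toReal) :
    ∀ A B : Set (EuclideanSpace ℝ (Fin d)), MeasurableSet A → MeasurableSet B →
    ∀ φA φB : EuclideanSpace ℝ (Fin d) → ℂ,
      MemLp φA 2 volume → MemLp φB 2 volume →
      (∀ x, x ∉ A → φA x = 0) → (∀ x, x ∉ B → φB x = 0) →
      ∀ c : ℝ, (∃ ψ ∈ D, ∀ x ∈ A, ∀ y ∈ B, c ≤ ψ x - ψ y) →
      ‖∫ x, (starRingEnd ℂ) (φA x) * S φB x‖ ≤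
        Real.exp (-(max c 0) ^ 2 / (4 * t)) *
          (eLpNorm φA 2 volume).toReal * (eLpNorm φB 2 volume).toReal :=
  stmt_8_general d t ht S D hD hS
end

section
/- Let D be a nonempty set of continuous functions ψ : ℝ^d → ℝ which is closed under the operations: (i) if ψ ∈ D and c ∈ ℝ then −ψ + c ∈ D; (ii) if ψ₁, ψ₂ ∈ D then max(ψ₁,ψ₂) ∈ D and min(ψ₁,ψ₂) ∈ D. Define d(x;y) = sup_{ψ∈D} (ψ(x) − ψ(y)) ∈ [0,∞] for x, y ∈ ℝ^d, and for sets A, B set d(A;B) = inf_{x∈A, y∈B} d(x;y) and d̂(A;B) = sup_{ψ∈D} inf_{x∈A, y∈B} (ψ(x) − ψ(y)). Then for all nonempty compact subsets A, B of ℝ^d one has d̂(A;B) = d(A;B), the equality holding in the extended reals. -/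
/-- Lemma 4.2: if `D` is a nonempty family of continuous functions closed under
`ψ ↦ -ψ + c`, `max` and `min`, then for all nonempty compact sets `A, B` the
set-theoretic distance `d(A;B) = inf_{x∈A,y∈B} sup_{ψ∈D} (ψ(x)-ψ(y))` coincides with
`d̂(A;B) = sup_{ψ∈D} inf_{x∈A,y∈B} (ψ(x)-ψ(y))`, in the extended reals. -/
theorem stmt_9 (d : ℕ) (D : Set (EuclideanSpace ℝ (Fin d) → ℝ))
    (hne : D.Nonempty)
    (hcont : ∀ ψ ∈ D, Continuous ψ)
    (hneg : ∀ ψ ∈ D, ∀ c : ℝ, (fun x => -ψ x + c) ∈ D)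
    (hmax : ∀ ψ₁ ∈ D, ∀ ψ₂ ∈ D, (fun x => max (ψ₁ x) (ψ₂ x)) ∈ D)
    (hmin : ∀ ψ₁ ∈ D, ∀ ψ₂ ∈ D, (fun x => min (ψ₁ x) (ψ₂ x)) ∈ D)
    (A B : Set (EuclideanSpace ℝ (Fin d)))
    (hA : IsCompact A) (hB : IsCompact B) (hAne : A.Nonempty) (hBne : B.Nonempty) :
    (⨆ ψ ∈ D, ⨅ x ∈ A, ⨅ y ∈ B, ((ψ x - ψ y : ℝ) : EReal)) =
      ⨅ x ∈ A, ⨅ y ∈ B, ⨆ ψ ∈ D, ((ψ x - ψ y : ℝ) : EReal) := by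
  -- closure under subtraction of a constant
  have hsub : ∀ ψ ∈ D, ∀ c : ℝ, (fun x => ψ x - c) ∈ D := by
    intro ψ hψ c
    have h1 := hneg ψ hψ 0
    have h2 := hneg _ h1 (-c)
    have : (fun x => -(-ψ x + 0) + -c) = (fun x => ψ x - c) := by
      funext x; ring
    rwa [this] at h2
  apply le_antisymm
  · refine iSup₂_le fun ψ hψ => le_iInf₂ fun x hx => le_iInf₂ fun y hy => ?_
    exact le_trans ((iInf₂_le x hx).trans (iInf₂_le y hy))
      (le_iSup₂ (f := fun ψ _ => ((ψ x - ψ y : ℝ) : EReal)) ψ hψ)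
  · refine le_of_forall_lt_imp_le_of_dense fun c hc => ?_
    obtain ⟨t, htc, htR⟩ := EReal.exists_between_coe_real hc
    refine le_trans htc.le ?_
    -- pointwise: for each x ∈ A, y ∈ B there is ψ ∈ D with t < ψ x - ψ y
    have hpt : ∀ x ∈ A, ∀ y ∈ B, ∃ ψ ∈ D, t < ψ x - ψ y := by
      intro x hx y hy
      have h := htR.trans_le ((iInf₂_le x hx).trans (iInf₂_le y hy))
      simp only [lt_iSup_iff] at h
      obtain ⟨ψ, hψ, hlt⟩ := h
      exact ⟨ψ, hψ, by exact_mod_cast hlt⟩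
    -- Step 1: for each y ∈ B, a single φ ∈ D works for all x ∈ A, with φ y = 0
    have step1 : ∀ y ∈ B, ∃ φ ∈ D, φ y = 0 ∧ ∀ x ∈ A, t < φ x := by
      intro y hy
      have hx' : ∀ x : A, ∃ ψ, ψ ∈ D ∧ ψ y = 0 ∧ t < ψ x := by
        rintro ⟨x, hx⟩
        obtain ⟨ψ, hψ, hlt⟩ := hpt x hx y hy
        exact ⟨fun z => ψ z - ψ y, hsub ψ hψ _, by simp, by simpa using hlt⟩
      choose g hgD hgy hgx using hx'
      have hUopen : ∀ i : A, IsOpen {z | t < g i z} :=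
        fun i => isOpen_lt continuous_const (hcont _ (hgD i))
      have hcover : A ⊆ ⋃ i : A, {z | t < g i z} := fun x hx =>
        Set.mem_iUnion.2 ⟨⟨x, hx⟩, hgx ⟨x, hx⟩⟩
      obtain ⟨s, hs⟩ := hA.elim_finite_subcover _ hUopen hcover
      obtain ⟨x₀, hx₀⟩ := hAne
      have hsne : s.Nonempty := by
        obtain ⟨i, hi, _⟩ := Set.mem_iUnion₂.1 (hs hx₀)
        exact ⟨i, hi⟩
      refine ⟨s.sup' hsne g, Finset.sup'_mem D (fun a ha b hb => hmax a ha b hb) s hsne g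
        (fun i _ => hgD i), ?_, ?_⟩
      · rw [Finset.sup'_apply]
        simp only [hgy]
        exact Finset.sup'_const hsne 0
      · intro x hx
        obtain ⟨i, hi, hxi⟩ := Set.mem_iUnion₂.1 (hs hx)
        calc t < g i x := hxi
          _ ≤ s.sup' hsne g x := by rw [Finset.sup'_apply]; exact Finset.le_sup' (fun a => g a x) hi
    -- Step 2: one ψ works uniformly on A × B
    have key : ∃ ψ ∈ D, ∀ x ∈ A, ∀ y ∈ B, t ≤ ψ x - ψ y := by
      -- for each y ∈ B, normalize so inf over A is 0
      have hy' : ∀ y : B, ∃ χ, χ ∈ D ∧ (∀ x ∈ A, 0 ≤ χ x) ∧ χ y < -t := by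
        rintro ⟨y, hy⟩
        obtain ⟨φ, hφ, hφy, hφx⟩ := step1 y hy
        obtain ⟨a, haA, hmin'⟩ := hA.exists_isMinOn hAne ((hcont φ hφ).continuousOn)
        refine ⟨fun z => φ z - φ a, hsub φ hφ _, fun x hx => by
          simpa using hmin' hx, ?_⟩
        simp only [hφy]
        have := hφx a haA
        simp; linarith
      choose g hgD hg0 hgy using hy'
      have hVopen : ∀ i : B, IsOpen {z | g i z < -t} :=
        fun i => isOpen_lt (hcont _ (hgD i)) continuous_const
      have hcover : B ⊆ ⋃ i : B, {z | g i z < -t} := fun y hy =>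
        Set.mem_iUnion.2 ⟨⟨y, hy⟩, hgy ⟨y, hy⟩⟩
      obtain ⟨s, hs⟩ := hB.elim_finite_subcover _ hVopen hcover
      obtain ⟨y₀, hy₀⟩ := hBne
      have hsne : s.Nonempty := by
        obtain ⟨i, hi, _⟩ := Set.mem_iUnion₂.1 (hs hy₀)
        exact ⟨i, hi⟩
      refine ⟨s.inf' hsne g, Finset.inf'_mem D (fun a ha b hb => hmin a ha b hb) s hsne g
        (fun i _ => hgD i), fun x hx y hy => ?_⟩
      obtain ⟨i, hi, hyi⟩ := Set.mem_iUnion₂.1 (hs hy)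
      have h1 : (0 : ℝ) ≤ s.inf' hsne g x := by
        rw [Finset.inf'_apply]
        exact Finset.le_inf' hsne (fun a => g a x) fun j _ => hg0 j x hx
      have h2 : s.inf' hsne g y < -t := by
        rw [Finset.inf'_apply]
        exact lt_of_le_of_lt (Finset.inf'_le (fun a => g a y) hi) hyi
      linarith
    obtain ⟨ψ, hψ, hψle⟩ := key
    refine le_iSup_of_le ψ (le_iSup_of_le hψ ?_)
    exact le_iInf₂ fun x hx => le_iInf₂ fun y hy => by exact_mod_cast hψle x hx y hy
end

section
/- Let δ ∈ [1/2, 1) and c_δ(x) = (x²/(1+x²))^δ. For integers n ≥ 2 define ξ_n : ℝ → [0,1] by ξ_n(x) = 1 for |x| ≤ 1/n, ξ_n(x) = (−log|x|)/log n for 1/n ≤ |x| ≤ 1, and ξ_n(x) = 0 for |x| ≥ 1. Then for every Lipschitz function φ : ℝ → ℝ with compact support, lim_{n→∞} [ ∫_ℝ c_δ(x) ((ξ_n φ)'(x))² dx + ∫_ℝ (ξ_n(x) φ(x))² dx ] = 0, where (ξ_n φ)' denotes the almost-everywhere derivative of the Lipschitz function ξ_n φ. -/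
/-!
Off the four points `|x| = 1/n, 1` the product rule gives `(ξ_n φ)' = ξ_n' φ + ξ_n φ'`,
so `c_δ |(ξ_n φ)'|² ≤ 2 M² c_δ ξ_n'² + 2 K² ξ_n²` with `M = sup |φ|` and `K` a Lipschitz
constant of `φ`. On the annulus `1/n < |x| < 1` we have `ξ_n' = -1/(x log n)`, and
`c_δ(x) ≤ |x|` because `δ ≥ 1/2`; hence `c_δ ξ_n'² ≤ 1/(|x| log² n)`, whose integral is
`2/log n`. The remaining terms are bounded by multiples of `∫ ξ_n²`, which tends to `0` by
dominated convergence: `0 ≤ ξ_n ≤ 1`, `ξ_n` vanishes off `[-1, 1]`, and `ξ_n(x) = O(1/log n)`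
for each `x ≠ 0`.
-/

open MeasureTheory Real Filter

/-- The one-dimensional degenerate coefficient `c_δ(x) = (x²/(1+x²))^δ`. -/
noncomputable def cOne (δ x : ℝ) : ℝ := (x ^ 2 / (1 + x ^ 2)) ^ δ

/-- The logarithmic cutoff `ξ_n`: equal to `1` for `|x| ≤ 1/n`, to
`(-log|x|)/log n` for `1/n ≤ |x| ≤ 1`, and to `0` for `|x| ≥ 1`. -/
noncomputable def xiCut (n : ℕ) (x : ℝ) : ℝ :=
  if |x| ≤ 1 / n then 1 else if |x| ≤ 1 then (-Real.log |x|) / Real.log n else 0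

open Set Topology

noncomputable def xiCutDeriv (n : ℕ) (x : ℝ) : ℝ :=
  if |x| ∈ Ioo (1 / n : ℝ) 1 then -x⁻¹ / Real.log n else 0

lemma cOne_nonneg (δ x : ℝ) : 0 ≤ cOne δ x := rpow_nonneg (by positivity) δ

lemma sq_div_one_add_sq_le_one (x : ℝ) : x ^ 2 / (1 + x ^ 2) ≤ 1 :=
  div_le_one_of_le₀ (by linarith) (by positivity)

lemma cOne_le_one {δ : ℝ} (hδ : 0 ≤ δ) (x : ℝ) : cOne δ x ≤ 1 :=
  rpow_le_one (by positivity) (sq_div_one_add_sq_le_one x) hδ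

lemma cOne_le_abs {δ : ℝ} (hδ : 1 / 2 ≤ δ) (x : ℝ) : cOne δ x ≤ |x| :=
  calc cOne δ x ≤ (x ^ 2 / (1 + x ^ 2)) ^ (1 / 2 : ℝ) :=
        rpow_le_rpow_of_exponent_ge' (by positivity) (sq_div_one_add_sq_le_one x) (by norm_num)
          hδ
    _ = √(x ^ 2 / (1 + x ^ 2)) := (sqrt_eq_rpow _).symm
    _ ≤ √(x ^ 2) := sqrt_le_sqrt (div_le_self (sq_nonneg x) (by linarith [sq_nonneg x]))
    _ = |x| := sqrt_sq_eq_abs x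

lemma cOne_mul_inv_sq_le {δ : ℝ} (hδ : 1 / 2 ≤ δ) (x : ℝ) : cOne δ x * x⁻¹ ^ 2 ≤ |x|⁻¹ :=
  calc cOne δ x * x⁻¹ ^ 2 ≤ |x| * x⁻¹ ^ 2 := by gcongr; exact cOne_le_abs hδ x
    _ = |x|⁻¹ := by
      rcases eq_or_ne x 0 with rfl | hx
      · simp
      · field_simp
        exact sq_abs x

lemma measurable_xiCut (n : ℕ) : Measurable (xiCut n) := by
  have habs : Measurable fun x : ℝ => |x| := measurable_abs
  refine Measurable.ite (habs measurableSet_Iic) measurable_const ?_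
  refine Measurable.ite (habs measurableSet_Iic) ?_ measurable_const
  exact (measurable_log.comp habs).neg.div_const _

lemma xiCut_nonneg (n : ℕ) (x : ℝ) : 0 ≤ xiCut n x := by
  unfold xiCut
  split_ifs with h₁ h₂
  · exact zero_le_one
  · exact div_nonneg (neg_nonneg.2 (log_nonpos (abs_nonneg x) h₂)) (log_natCast_nonneg n)
  · exact le_rfl

lemma xiCut_le_one (n : ℕ) (x : ℝ) : xiCut n x ≤ 1 := by
  unfold xiCut
  split_ifs with h₁ h₂
  · exact le_rfl
  · rcases Nat.eq_zero_or_pos n with rfl | hn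
    · simp
    · refine div_le_one_of_le₀ ?_ (log_natCast_nonneg n)
      have := log_le_log (by positivity) (not_le.1 h₁).le
      rw [one_div, log_inv] at this
      linarith
  · exact zero_le_one

lemma xiCut_eq_zero_of_one_lt_abs (n : ℕ) {x : ℝ} (hx : 1 < |x|) : xiCut n x = 0 := by
  rw [xiCut, if_neg, if_neg hx.not_ge]
  exact fun h => hx.not_ge (h.trans (one_div (n : ℝ) ▸ Nat.cast_inv_le_one n))

lemma xiCut_sq_le_indicator (n : ℕ) (x : ℝ) :
    xiCut n x ^ 2 ≤ (Icc (-1 : ℝ) 1).indicator (1 : ℝ → ℝ) x := by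
  by_cases hx : x ∈ Icc (-1 : ℝ) 1
  · rw [indicator_of_mem hx, Pi.one_apply]
    exact pow_le_one₀ (xiCut_nonneg n x) (xiCut_le_one n x)
  · rw [indicator_of_notMem hx, xiCut_eq_zero_of_one_lt_abs n (not_le.1 (abs_le.not.2 hx))]
    norm_num

lemma integrable_indicator_Icc_one : Integrable ((Icc (-1 : ℝ) 1).indicator (1 : ℝ → ℝ)) :=
  (integrableOn_const measure_Icc_lt_top.ne).integrable_indicator measurableSet_Icc

lemma integrable_xiCut_sq (n : ℕ) : Integrable fun x => xiCut n x ^ 2 :=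
  integrable_indicator_Icc_one.mono' ((measurable_xiCut n).pow_const 2).aestronglyMeasurable
    (Eventually.of_forall fun x => by
      rw [norm_of_nonneg (sq_nonneg _)]
      exact xiCut_sq_le_indicator n x)

lemma tendsto_xiCut_atTop {x : ℝ} (hx : x ≠ 0) :
    Tendsto (fun n : ℕ => xiCut n x) atTop (𝓝 0) := by
  have hlim : Tendsto (fun n : ℕ => (if |x| ≤ 1 then -log |x| else 0) / log n) atTop (𝓝 0) :=
    tendsto_const_nhds.div_atTop (tendsto_log_atTop.comp tendsto_natCast_atTop_atTop)
  refine hlim.congr' ?_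
  filter_upwards [tendsto_one_div_atTop_nhds_zero_nat.eventually (gt_mem_nhds (abs_pos.2 hx))]
    with n hn
  rw [xiCut, if_neg hn.not_ge]
  split_ifs <;> simp

lemma tendsto_integral_xiCut_sq : Tendsto (fun n : ℕ => ∫ x, xiCut n x ^ 2) atTop (𝓝 0) := by
  simpa using tendsto_integral_of_dominated_convergence (f := fun _ => 0) _
    (fun n => ((measurable_xiCut n).pow_const 2).aestronglyMeasurable)
    integrable_indicator_Icc_one
    (fun n => Eventually.of_forall fun x => by
      rw [norm_of_nonneg (sq_nonneg _)]
      exact xiCut_sq_le_indicator n x)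
    (by
      filter_upwards [Measure.ae_ne volume 0] with x hx
      simpa using (tendsto_xiCut_atTop hx).pow 2)

lemma hasDerivAt_xiCut {n : ℕ} {x : ℝ} (h₁ : |x| ≠ 1 / n) (h₂ : |x| ≠ 1) :
    HasDerivAt (xiCut n) (xiCutDeriv n x) x := by
  rcases h₁.lt_or_gt with hin | hout
  · have hloc : xiCut n =ᶠ[𝓝 x] fun _ => 1 := by
      filter_upwards [(isOpen_lt continuous_abs continuous_const).mem_nhds hin] with y hy
      exact if_pos hy.le
    rw [xiCutDeriv, if_neg fun h => hin.not_gt h.1]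
    exact (hasDerivAt_const x 1).congr_of_eventuallyEq hloc
  have hout' : ∀ᶠ y in 𝓝 x, 1 / (n : ℝ) < |y| :=
    (isOpen_lt continuous_const continuous_abs).mem_nhds hout
  rcases h₂.lt_or_gt with hmid | hfar
  · have hx : x ≠ 0 := abs_pos.1 ((one_div_nonneg.2 n.cast_nonneg).trans_lt hout)
    have hloc : xiCut n =ᶠ[𝓝 x] fun y => -log y / log n := by
      filter_upwards [hout', (isOpen_lt continuous_abs continuous_const).mem_nhds hmid]
        with y hy₁ hy₂
      rw [xiCut, if_neg hy₁.not_ge, if_pos hy₂.le, log_abs]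
    rw [xiCutDeriv, if_pos ⟨hout, hmid⟩]
    exact ((hasDerivAt_log hx).neg.div_const _).congr_of_eventuallyEq hloc
  · have hloc : xiCut n =ᶠ[𝓝 x] fun _ => 0 := by
      filter_upwards [(isOpen_lt continuous_const continuous_abs).mem_nhds hfar] with y hy
      exact xiCut_eq_zero_of_one_lt_abs n hy
    rw [xiCutDeriv, if_neg fun h => hfar.not_gt h.2]
    exact (hasDerivAt_const x 0).congr_of_eventuallyEq hloc

lemma ae_abs_ne (a : ℝ) : ∀ᵐ x : ℝ, |x| ≠ a := by
  filter_upwards [Measure.ae_ne volume a, Measure.ae_ne volume (-a)] with x h₁ h₂ h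
  exact (eq_or_eq_neg_of_abs_eq h).elim h₁ h₂

lemma integrable_indicator_Ioo_inv_abs {a : ℝ} (ha : 0 < a) (b : ℝ) :
    Integrable fun x : ℝ => (Ioo a b).indicator (·⁻¹) |x| := by
  refine Integrable.mono' (g := (Icc (-b) b).indicator fun _ => a⁻¹)
    ((integrableOn_const measure_Icc_lt_top.ne).integrable_indicator measurableSet_Icc)
    ((measurable_inv.indicator measurableSet_Ioo).comp measurable_abs).aestronglyMeasurable
    (Eventually.of_forall fun x => ?_)
  by_cases hx : |x| ∈ Ioo a b
  · have hx' : x ∈ Icc (-b) b := abs_le.1 hx.2.le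
    rw [indicator_of_mem hx, indicator_of_mem hx', norm_inv, norm_abs_eq_norm, norm_eq_abs]
    exact inv_anti₀ ha hx.1.le
  · rw [indicator_of_notMem hx, norm_zero]
    exact indicator_nonneg (fun _ _ => (inv_pos.2 ha).le) x

lemma integral_indicator_Ioo_inv_abs {a b : ℝ} (ha : 0 < a) (hab : a ≤ b) :
    ∫ x : ℝ, (Ioo a b).indicator (·⁻¹) |x| = 2 * log (b / a) := by
  rw [integral_comp_abs (f := (Ioo a b).indicator (·⁻¹)), setIntegral_indicator measurableSet_Ioo,
    inter_eq_right.2 (Ioo_subset_Ioi_self.trans (Ioi_subset_Ioi ha.le)),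
    ← integral_Ioc_eq_integral_Ioo, ← intervalIntegral.integral_of_le hab,
    integral_inv_of_pos ha (ha.trans_le hab)]

lemma cOne_mul_xiCutDeriv_sq_le {δ : ℝ} (hδ : 1 / 2 ≤ δ) (n : ℕ) (x : ℝ) :
    cOne δ x * xiCutDeriv n x ^ 2 ≤ (Ioo (1 / n : ℝ) 1).indicator (·⁻¹) |x| / log n ^ 2 := by
  unfold xiCutDeriv
  split_ifs with h
  · rw [indicator_of_mem h]
    calc cOne δ x * (-x⁻¹ / log n) ^ 2 = cOne δ x * x⁻¹ ^ 2 / log n ^ 2 := by ring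
      _ ≤ |x|⁻¹ / log n ^ 2 := by gcongr; exact cOne_mul_inv_sq_le hδ x
  · rw [indicator_of_notMem h]
    simp

section Lipschitz

variable {φ : ℝ → ℝ} {K : NNReal} {M : ℝ}

lemma ae_cOne_mul_deriv_xiCut_mul_sq_le {δ : ℝ} (hδ : 1 / 2 ≤ δ) (hK : LipschitzWith K φ)
    (hM : ∀ x, ‖φ x‖ ≤ M) (n : ℕ) :
    ∀ᵐ x, cOne δ x * deriv (fun y => xiCut n y * φ y) x ^ 2 ≤
      2 * M ^ 2 * ((Ioo (1 / n : ℝ) 1).indicator (·⁻¹) |x| / log n ^ 2) +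
        2 * K ^ 2 * xiCut n x ^ 2 := by
  filter_upwards [hK.ae_differentiableAt, ae_abs_ne (1 / n), ae_abs_ne 1] with x hφ h₁ h₂
  have hψ : HasDerivAt (fun y => xiCut n y * φ y) _ x :=
    (hasDerivAt_xiCut h₁ h₂).mul hφ.hasDerivAt
  rw [hψ.deriv]
  have hc₀ := cOne_nonneg δ x
  have hc₁ : cOne δ x ≤ 1 := cOne_le_one (by linarith) x
  have hξ := cOne_mul_xiCutDeriv_sq_le hδ n x
  have hφx : φ x ^ 2 ≤ M ^ 2 := sq_le_sq.2 ((hM x).trans (le_abs_self M))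
  have hφ'x : deriv φ x ^ 2 ≤ K ^ 2 :=
    sq_le_sq.2 ((norm_deriv_le_of_lipschitz hK).trans (le_abs_self _))
  set u := xiCutDeriv n x * φ x
  set v := xiCut n x * deriv φ x
  have hu : cOne δ x * u ^ 2 ≤ M ^ 2 * (cOne δ x * xiCutDeriv n x ^ 2) := by
    rw [mul_pow, ← mul_assoc, mul_comm (M ^ 2)]
    exact mul_le_mul_of_nonneg_left hφx (by positivity)
  have hv : cOne δ x * v ^ 2 ≤ K ^ 2 * xiCut n x ^ 2 :=
    calc cOne δ x * v ^ 2 ≤ v ^ 2 := mul_le_of_le_one_left (sq_nonneg v) hc₁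
      _ = deriv φ x ^ 2 * xiCut n x ^ 2 := by ring
      _ ≤ K ^ 2 * xiCut n x ^ 2 := by gcongr
  have hw := mul_le_mul_of_nonneg_left hξ (sq_nonneg M)
  nlinarith [sq_nonneg (u - v)]

lemma integral_cOne_mul_deriv_xiCut_mul_sq_le {δ : ℝ} (hδ : 1 / 2 ≤ δ)
    (hK : LipschitzWith K φ) (hM : ∀ x, ‖φ x‖ ≤ M) {n : ℕ} (hn : 0 < n) :
    ∫ x, cOne δ x * deriv (fun y => xiCut n y * φ y) x ^ 2 ≤
      4 * M ^ 2 / log n + 2 * K ^ 2 * ∫ x, xiCut n x ^ 2 := by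
  have hn₀ : (0 : ℝ) < 1 / n := by positivity
  have hn₁ : (1 / n : ℝ) ≤ 1 := one_div (n : ℝ) ▸ Nat.cast_inv_le_one n
  have hw := (integrable_indicator_Ioo_inv_abs hn₀ 1).div_const (log n ^ 2)
  calc ∫ x, cOne δ x * deriv (fun y => xiCut n y * φ y) x ^ 2
      ≤ ∫ x, 2 * M ^ 2 * ((Ioo (1 / n : ℝ) 1).indicator (·⁻¹) |x| / log n ^ 2) +
          2 * K ^ 2 * xiCut n x ^ 2 :=
        integral_mono_of_nonneg
          (Eventually.of_forall fun x => mul_nonneg (cOne_nonneg δ x) (sq_nonneg _))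
          ((hw.const_mul _).add ((integrable_xiCut_sq n).const_mul _))
          (ae_cOne_mul_deriv_xiCut_mul_sq_le hδ hK hM n)
    _ = 2 * M ^ 2 * (2 * log n / log n ^ 2) + 2 * K ^ 2 * ∫ x, xiCut n x ^ 2 := by
        rw [integral_add (hw.const_mul _) ((integrable_xiCut_sq n).const_mul _),
          integral_const_mul, integral_div, integral_indicator_Ioo_inv_abs hn₀ hn₁,
          one_div_one_div, integral_const_mul]
    _ = 4 * M ^ 2 / log n + 2 * K ^ 2 * ∫ x, xiCut n x ^ 2 := by
        rcases eq_or_ne (log n) 0 with h | h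
        · simp [h]
        · field_simp
          ring

lemma integral_xiCut_mul_sq_le (hM : ∀ x, ‖φ x‖ ≤ M) (n : ℕ) :
    ∫ x, (xiCut n x * φ x) ^ 2 ≤ M ^ 2 * ∫ x, xiCut n x ^ 2 := by
  rw [← integral_const_mul]
  refine integral_mono_of_nonneg (Eventually.of_forall fun x => sq_nonneg _)
    ((integrable_xiCut_sq n).const_mul _) (Eventually.of_forall fun x => ?_)
  dsimp only
  rw [mul_pow, mul_comm]
  exact mul_le_mul_of_nonneg_right (sq_le_sq.2 ((hM x).trans (le_abs_self M))) (sq_nonneg _)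

end Lipschitz

theorem stmt_18_general (δ : ℝ) (hδ : 1 / 2 ≤ δ)
    (φ : ℝ → ℝ) (hlip : ∃ K, LipschitzWith K φ) (hsupp : HasCompactSupport φ) :
    Tendsto (fun n : ℕ =>
        (∫ x : ℝ, cOne δ x * (deriv (fun y => xiCut n y * φ y) x) ^ 2) +
          ∫ x : ℝ, (xiCut n x * φ x) ^ 2)
      atTop (nhds 0) := by
  obtain ⟨K, hK⟩ := hlip
  obtain ⟨M, hM⟩ := hsupp.exists_bound_of_continuous hK.continuous
  have hbound : Tendsto (fun n : ℕ =>
      4 * M ^ 2 / log n + (2 * K ^ 2 + M ^ 2) * ∫ x, xiCut n x ^ 2) atTop (𝓝 0) := by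
    simpa using (tendsto_const_nhds.div_atTop
      (tendsto_log_atTop.comp tendsto_natCast_atTop_atTop)).add
      (tendsto_integral_xiCut_sq.const_mul (2 * (K : ℝ) ^ 2 + M ^ 2))
  refine tendsto_of_tendsto_of_tendsto_of_le_of_le' tendsto_const_nhds hbound
    (Eventually.of_forall fun n => add_nonneg
      (integral_nonneg fun x => mul_nonneg (cOne_nonneg δ x) (sq_nonneg _))
      (integral_nonneg fun x => sq_nonneg _)) ?_
  filter_upwards [eventually_gt_atTop 0] with n hn
  linarith [integral_cOne_mul_deriv_xiCut_mul_sq_le hδ hK hM hn, integral_xiCut_mul_sq_le hM n]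

/-- Zero capacity of the origin in the strongly degenerate case (Proposition 6.5):
for `δ ∈ [1/2,1)` and every compactly supported Lipschitz `φ`,
`h(ξ_n φ) + ‖ξ_n φ‖₂² → 0` as `n → ∞`, where `h(ψ) = ∫ c_δ ψ'²` and the derivative
is the almost-everywhere derivative of the Lipschitz function `ξ_n φ`. -/
theorem stmt_18 (δ : ℝ) (hδ : 1 / 2 ≤ δ) (hδ1 : δ < 1)
    (φ : ℝ → ℝ) (hlip : ∃ K, LipschitzWith K φ) (hsupp : HasCompactSupport φ) :
    Tendsto (fun n : ℕ =>
        (∫ x : ℝ, cOne δ x * (deriv (fun y => xiCut n y * φ y) x) ^ 2) +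
          ∫ x : ℝ, (xiCut n x * φ x) ^ 2)
      atTop (nhds 0) :=
  stmt_18_general δ hδ φ hlip hsupp
end
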